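/- Let F = P_{ℓ_1} ∪ (⋃_{j=1}^q S_{a_j}) with ℓ_1 ≥ 4 even, q ≥ 1, a_1 ≥ ⋯ ≥ a_q ≥ 3 and a_q ≥ ℓ_1 − 1. Write n = q + d(ℓ_1 − 1) + r with 0 ≤ r < ℓ_1 − 1, and let 0 ≤ s ≤ d − 2. Then: (i) if (s+1)(ℓ_1 − 1) + r ≤ a_q, the graph G(s) contains no subgraph isomorphic to F; (ii) there exists N (depending only on F) such that if n ≥ N and (s+1)(ℓ_1 − 1) + r ≥ a_q + 1, then G(s) contains a subgraph isomorphic to F. -/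

import Mathlib

open SimpleGraph Finset

/-- `G` contains a copy of `H` (a subgraph isomorphic to `H`). -/
def ContainsCopy {V W : Type*} (H : SimpleGraph W) (G : SimpleGraph V) : Prop :=
  ∃ f : H →g G, Function.Injective f

/-- `G` is `H`-free: it contains no subgraph isomorphic to `H`. -/
def IsFree {V W : Type*} (H : SimpleGraph W) (G : SimpleGraph V) : Prop :=
  ¬ ContainsCopy H G

/-- The Turán number `ex(n, H)`: the maximum number of edges of an `H`-free
graph on `n` vertices. -/
noncomputable def exNum {W : Type*} (n : ℕ) (H : SimpleGraph W) : ℕ :=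
  sSup {m | ∃ G : SimpleGraph (Fin n), IsFree H G ∧ G.edgeSet.ncard = m}

/-- `G` is an extremal (`H`-free with `ex(n,H)` edges) graph on `n` vertices. -/
def IsExtremal {W : Type*} (n : ℕ) (H : SimpleGraph W) (G : SimpleGraph (Fin n)) : Prop :=
  IsFree H G ∧ G.edgeSet.ncard = exNum n H

/-- Disjoint union of an indexed family of graphs. -/
def sigmaUnion {ι : Type*} {V : ι → Type*} (G : ∀ i, SimpleGraph (V i)) :
    SimpleGraph (Σ i, V i) where
  Adj x y := ∃ (i : ι) (u v : V i), (G i).Adj u v ∧ x = ⟨i, u⟩ ∧ y = ⟨i, v⟩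
  symm := by
    refine ⟨?_⟩
    rintro x y ⟨i, u, v, h, rfl, rfl⟩
    exact ⟨i, v, u, h.symm, rfl, rfl⟩
  loopless := by
    refine ⟨?_⟩
    rintro x ⟨i, u, v, h, rfl, he⟩
    simp only [Sigma.mk.inj_iff, heq_eq_eq, true_and] at he
    exact (G i).irrefl (he ▸ h)

/-- Disjoint union of two graphs on the sum type. -/
def dUnion {α β : Type*} (G : SimpleGraph α) (H : SimpleGraph β) :
    SimpleGraph (α ⊕ β) where
  Adj x y := Sum.LiftRel G.Adj H.Adj x y
  symm := by
    refine ⟨?_⟩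
    rintro x y (h | h)
    · exact Sum.LiftRel.inl h.symm
    · exact Sum.LiftRel.inr h.symm
  loopless := by
    refine ⟨?_⟩
    rintro x (h | h)
    · exact G.irrefl h
    · exact H.irrefl h

/-- The join `G ∨ H` of two graphs: disjoint union plus all edges in between. -/
def joinG {α β : Type*} (G : SimpleGraph α) (H : SimpleGraph β) :
    SimpleGraph (α ⊕ β) where
  Adj x y := match x, y with
    | .inl u, .inl v => G.Adj u v
    | .inr u, .inr v => H.Adj u v
    | .inl _, .inr _ => True
    | .inr _, .inl _ => True
  symm := by
    refine ⟨?_⟩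
    rintro (u | u) (v | v) h
    · exact h.symm
    · trivial
    · trivial
    · exact h.symm
  loopless := by
    refine ⟨?_⟩
    rintro (u | u) h
    · exact G.irrefl h
    · exact H.irrefl h

/-- The star `S_a` with `a` edges (`a + 1` vertices), centered at `0`. -/
def starGraph (a : ℕ) : SimpleGraph (Fin (a + 1)) where
  Adj x y := x ≠ y ∧ (x = 0 ∨ y = 0)
  symm := ⟨fun _ _ ⟨h1, h2⟩ => ⟨h1.symm, h2.symm⟩⟩
  loopless := ⟨fun _ h => h.1 rfl⟩

/-- The matching `M_k`: `(k/2) K_2` if `k` is even, `((k-1)/2) K_2 ∪ K_1` if `k` is odd. -/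
def matchingGraph (k : ℕ) : SimpleGraph (Fin k) where
  Adj x y := x ≠ y ∧ (x : ℕ) / 2 = (y : ℕ) / 2
  symm := ⟨fun _ _ ⟨h1, h2⟩ => ⟨h1.symm, h2.symm⟩⟩
  loopless := ⟨fun _ h => h.1 rfl⟩

/-- `k` disjoint copies of the graph `G`. -/
def kCopies {α : Type*} (k : ℕ) (G : SimpleGraph α) : SimpleGraph (Σ _ : Fin k, α) :=
  sigmaUnion fun _ => G

/-- The linear forest `⋃_{i=1}^p P_{ℓ i}`. -/
def pathForest (p : ℕ) (ℓ : Fin p → ℕ) : SimpleGraph (Σ i, Fin (ℓ i)) :=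
  sigmaUnion fun i => pathGraph (ℓ i)

/-- The star forest `⋃_{j=1}^q S_{a j}`. -/
def starForest (q : ℕ) (a : Fin q → ℕ) : SimpleGraph (Σ j, Fin (a j + 1)) :=
  sigmaUnion fun j => starGraph (a j)

/-- The path-star forest `(⋃_{i=1}^p P_{ℓ i}) ∪ (⋃_{j=1}^q S_{a j})`. -/
def pathStarForest (p q : ℕ) (ℓ : Fin p → ℕ) (a : Fin q → ℕ) :
    SimpleGraph ((Σ i, Fin (ℓ i)) ⊕ (Σ j, Fin (a j + 1))) :=
  dUnion (pathForest p ℓ) (starForest q a)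

/-- `δ_F = Σ_i ⌊ℓ_i / 2⌋`. -/
def deltaF (p : ℕ) (ℓ : Fin p → ℕ) : ℕ := ∑ i, ℓ i / 2

/-- `μ_F = 1` if (`p = 1` and `ℓ_1` even) or (`p ≥ 2` and some `ℓ_i ≠ 3`), else `1/2`. -/
def muF (p : ℕ) (ℓ : Fin p → ℕ) : ℚ :=
  if (p = 1 ∧ ∀ i, Even (ℓ i)) ∨ (2 ≤ p ∧ ∃ i, ℓ i ≠ 3) then 1 else 1/2

/-- `β_F = q + δ_F − μ_F`. -/
def betaF (p q : ℕ) (ℓ : Fin p → ℕ) : ℚ :=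
  (q : ℚ) + (deltaF p ℓ : ℚ) - muF p ℓ

/-- `G_1(n,k) = K_k ∨ K̄_{n-k}`. -/
def g1 (n k : ℕ) : SimpleGraph (Fin k ⊕ Fin (n - k)) :=
  joinG (⊤ : SimpleGraph (Fin k)) (⊥ : SimpleGraph (Fin (n - k)))

/-- `G_1⁺(n,k) = K_k ∨ (K_2 ∪ K̄_{n-k-2})`. -/
def g1plus (n k : ℕ) : SimpleGraph (Fin k ⊕ (Fin 2 ⊕ Fin (n - k - 2))) :=
  joinG (⊤ : SimpleGraph (Fin k))
    (dUnion (⊤ : SimpleGraph (Fin 2)) (⊥ : SimpleGraph (Fin (n - k - 2))))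

/-- `G_2(n,k,ℓ) = K_k ∨ (d K_{ℓ-1} ∪ K_r)` where `n = k + d(ℓ-1) + r`. -/
def g2 (k d ℓ r : ℕ) :
    SimpleGraph (Fin k ⊕ ((Σ _ : Fin d, Fin (ℓ - 1)) ⊕ Fin r)) :=
  joinG (⊤ : SimpleGraph (Fin k))
    (dUnion (kCopies d (⊤ : SimpleGraph (Fin (ℓ - 1)))) (⊤ : SimpleGraph (Fin r)))

/-- `G(s) = K_q ∨ ( (d-s-1) K_{ℓ-1} ∪ ( K_{(ℓ-2)/2} ∨ K̄_{ℓ/2 + s(ℓ-1) + r} ) )`. -/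
def gS (q ℓ d r s : ℕ) :
    SimpleGraph (Fin q ⊕ ((Σ _ : Fin (d - s - 1), Fin (ℓ - 1)) ⊕
      (Fin ((ℓ - 2) / 2) ⊕ Fin (ℓ / 2 + s * (ℓ - 1) + r)))) :=
  joinG (⊤ : SimpleGraph (Fin q))
    (dUnion (kCopies (d - s - 1) (⊤ : SimpleGraph (Fin (ℓ - 1))))
      (joinG (⊤ : SimpleGraph (Fin ((ℓ - 2) / 2)))
        (⊥ : SimpleGraph (Fin (ℓ / 2 + s * (ℓ - 1) + r)))))

section EmbedAux

/-- `a` extended to `ℕ` by zero. -/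
def aNat (q : ℕ) (a : Fin q → ℕ) (j : ℕ) : ℕ := if h : j < q then a ⟨j, h⟩ else 0

/-- partial sums of `a`. -/
def oSum (q : ℕ) (a : Fin q → ℕ) (j : ℕ) : ℕ := ∑ i ∈ Finset.range j, aNat q a i

lemma oSum_succ (q : ℕ) (a : Fin q → ℕ) (j : ℕ) :
    oSum q a (j + 1) = oSum q a j + aNat q a j := Finset.sum_range_succ _ _

lemma oSum_mono (q : ℕ) (a : Fin q → ℕ) : Monotone (oSum q a) := fun _ _ h =>
  Finset.sum_le_sum_of_subset (Finset.range_subset_range.2 h)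

lemma aNat_fin (q : ℕ) (a : Fin q → ℕ) (j : Fin q) : aNat q a j.val = a j := by
  rw [aNat, dif_pos j.isLt]

lemma oSum_add_le (q : ℕ) (a : Fin q → ℕ) (j : Fin q) (J : ℕ) (h : j.val + 1 ≤ J) :
    oSum q a j.val + a j ≤ oSum q a J := by
  have h1 := oSum_succ q a j.val
  have h2 := aNat_fin q a j
  have h3 := oSum_mono q a h
  omega

lemma oSum_flat {q : ℕ} {a : Fin q → ℕ} {j j' : Fin q} {k k' : ℕ}
    (hk : k < a j) (hk' : k' < a j')
    (h : oSum q a j.val + k = oSum q a j'.val + k') : j = j' ∧ k = k' := by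
  rcases lt_trichotomy j.val j'.val with hlt | heq | hlt
  · have h1 : oSum q a j.val + a j ≤ oSum q a j'.val := oSum_add_le q a j _ (by omega)
    omega
  · have hjj : j = j' := Fin.ext heq
    subst hjj
    exact ⟨rfl, by omega⟩
  · have h1 : oSum q a j'.val + a j' ≤ oSum q a j.val := oSum_add_le q a j' _ (by omega)
    omega

lemma oSum_total (q : ℕ) (a : Fin q → ℕ) (hq : 1 ≤ q) :
    oSum q a (q - 1) + a ⟨q - 1, by omega⟩ = ∑ j, a j := by
  have h1 : oSum q a q = ∑ j, a j := by
    rw [oSum, ← Fin.sum_univ_eq_sum_range]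
    exact Finset.sum_congr rfl fun j _ => aNat_fin q a j
  have h2 := oSum_add_le q a ⟨q - 1, by omega⟩ q (by omega)
  have h3 := oSum_succ q a (q - 1)
  have h4 := aNat_fin q a ⟨q - 1, by omega⟩
  simp only [Fin.val_mk] at h2 h4
  rw [show q - 1 + 1 = q by omega] at h3
  omega

variable (ℓ₁ q d r s aq : ℕ) (a : Fin q → ℕ)

/-- target vertex type of `gS`. -/
abbrev gSV := Fin q ⊕ ((Σ _ : Fin (d - s - 1), Fin (ℓ₁ - 1)) ⊕
    (Fin ((ℓ₁ - 2) / 2) ⊕ Fin (ℓ₁ / 2 + s * (ℓ₁ - 1) + r)))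

def embedPath (hq : 1 ≤ q) (h4 : 4 ≤ ℓ₁) (hd : s + 2 ≤ d) :
    (Σ _ : Fin 1, Fin ℓ₁) → gSV ℓ₁ q d r s := fun x =>
  if x.2.val = 0 then Sum.inl ⟨q - 1, by omega⟩
  else Sum.inr (Sum.inl ⟨⟨0, by omega⟩, ⟨x.2.val - 1, by have := x.2.isLt; omega⟩⟩)

def embedStar (h4 : 4 ≤ ℓ₁) (he : ℓ₁ % 2 = 0) (hq : 1 ≤ q) (hd : s + 2 ≤ d)
    (haq : ∀ j : Fin q, j.val = q - 1 → a j = aq)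
    (hge : ℓ₁ - 1 ≤ aq)
    (hlow : aq + 1 ≤ s * (ℓ₁ - 1) + (ℓ₁ - 1) + r)
    (hcap : oSum q a (q - 1) + aq + 1 ≤ (d - s - 2) * (ℓ₁ - 1) + s * (ℓ₁ - 1) + (ℓ₁ - 1) + r) :
    (Σ j : Fin q, Fin (a j + 1)) → gSV ℓ₁ q d r s := fun x =>
  if hj : x.1.val = q - 1 then
    if x.2.val = 0 then Sum.inr (Sum.inr (Sum.inl ⟨0, by omega⟩))
    else if h2 : x.2.val < (ℓ₁ - 2) / 2 then Sum.inr (Sum.inr (Sum.inl ⟨x.2.val, h2⟩))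
    else Sum.inr (Sum.inr (Sum.inr ⟨x.2.val - (ℓ₁ - 2) / 2, by
      have hb := x.2.isLt
      have hax := haq x.1 hj
      omega⟩))
  else if hk0 : x.2.val = 0 then Sum.inl x.1
  else if hx : oSum q a x.1.val + (x.2.val - 1) < (d - s - 2) * (ℓ₁ - 1) then
    Sum.inr (Sum.inl ⟨⟨1 + (oSum q a x.1.val + (x.2.val - 1)) / (ℓ₁ - 1), by
      have h1 := (Nat.div_lt_iff_lt_mul (show 0 < ℓ₁ - 1 by omega)).2 hx
      omega⟩, ⟨(oSum q a x.1.val + (x.2.val - 1)) % (ℓ₁ - 1), Nat.mod_lt _ (by omega)⟩⟩)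
  else
    Sum.inr (Sum.inr (Sum.inr ⟨(aq - ((ℓ₁ - 2) / 2 - 1)) +
        (oSum q a x.1.val + (x.2.val - 1) - (d - s - 2) * (ℓ₁ - 1)), by
      have hb := x.2.isLt
      have hjl := x.1.isLt
      have h1 : oSum q a x.1.val + a x.1 ≤ oSum q a (q - 1) :=
        oSum_add_le q a x.1 _ (by omega)
      omega⟩))

end EmbedAux
section EmbedAux2
variable (ℓ₁ q d r s aq : ℕ) (a : Fin q → ℕ)

lemma gS_adj_inl_inr (u : Fin q) (v) : (gS q ℓ₁ d r s).Adj (Sum.inl u) (Sum.inr v) := trivial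

lemma gS_adj_inl_inl {u v : Fin q} (h : u ≠ v) :
    (gS q ℓ₁ d r s).Adj (Sum.inl u) (Sum.inl v) := h

lemma gS_adj_copy {i : Fin (d - s - 1)} {u v : Fin (ℓ₁ - 1)} (h : u ≠ v) :
    (gS q ℓ₁ d r s).Adj (Sum.inr (Sum.inl ⟨i, u⟩)) (Sum.inr (Sum.inl ⟨i, v⟩)) :=
  Sum.LiftRel.inl ⟨i, u, v, h, rfl, rfl⟩

lemma gS_adj_BKK {u v : Fin ((ℓ₁ - 2) / 2)} (h : u ≠ v) :
    (gS q ℓ₁ d r s).Adj (Sum.inr (Sum.inr (Sum.inl u))) (Sum.inr (Sum.inr (Sum.inl v))) :=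
  Sum.LiftRel.inr h

lemma gS_adj_BKE (u : Fin ((ℓ₁ - 2) / 2)) (v) :
    (gS q ℓ₁ d r s).Adj (Sum.inr (Sum.inr (Sum.inl u))) (Sum.inr (Sum.inr (Sum.inr v))) :=
  Sum.LiftRel.inr trivial

variable (h4 : 4 ≤ ℓ₁) (he : ℓ₁ % 2 = 0) (hq : 1 ≤ q) (hd : s + 2 ≤ d)
  (hlast : ∀ j : Fin q, j.val = q - 1 → a j = aq) (hge : ℓ₁ - 1 ≤ aq)
  (hlow : aq + 1 ≤ s * (ℓ₁ - 1) + (ℓ₁ - 1) + r)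
  (hcap : oSum q a (q - 1) + aq + 1 ≤ (d - s - 2) * (ℓ₁ - 1) + s * (ℓ₁ - 1) + (ℓ₁ - 1) + r)

lemma embed_hom : ∀ x y, (pathStarForest 1 q (fun _ => ℓ₁) a).Adj x y →
    (gS q ℓ₁ d r s).Adj
      (Sum.elim (embedPath ℓ₁ q d r s hq h4 hd)
        (embedStar ℓ₁ q d r s aq a h4 he hq hd hlast hge hlow hcap) x)
      (Sum.elim (embedPath ℓ₁ q d r s hq h4 hd)
        (embedStar ℓ₁ q d r s aq a h4 he hq hd hlast hge hlow hcap) y) := by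
  have key : ∀ (i0 : Fin 1) (u v : Fin ℓ₁), u.val + 1 = v.val →
      (gS q ℓ₁ d r s).Adj (embedPath ℓ₁ q d r s hq h4 hd ⟨i0, u⟩)
        (embedPath ℓ₁ q d r s hq h4 hd ⟨i0, v⟩) := by
    intro i0 u v huv
    simp only [embedPath]
    by_cases h0 : u.val = 0
    · rw [if_pos h0, if_neg (by omega)]
      exact gS_adj_inl_inr ℓ₁ q d r s _ _
    · rw [if_neg h0, if_neg (by omega)]
      exact gS_adj_copy ℓ₁ q d r s (by simp only [ne_eq, Fin.mk.injEq]; omega)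
  have keyS : ∀ (j : Fin q) (u v : Fin (a j + 1)), u.val = 0 → v.val ≠ 0 →
      (gS q ℓ₁ d r s).Adj
        (embedStar ℓ₁ q d r s aq a h4 he hq hd hlast hge hlow hcap ⟨j, u⟩)
        (embedStar ℓ₁ q d r s aq a h4 he hq hd hlast hge hlow hcap ⟨j, v⟩) := by
    intro j u v hu0 hv0
    simp only [embedStar]
    by_cases hj : j.val = q - 1
    · rw [dif_pos hj, dif_pos hj, if_pos hu0, if_neg hv0]
      by_cases h2 : v.val < (ℓ₁ - 2) / 2
      · rw [dif_pos h2]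
        exact gS_adj_BKK ℓ₁ q d r s (by simp only [ne_eq, Fin.mk.injEq]; omega)
      · rw [dif_neg h2]
        exact gS_adj_BKE ℓ₁ q d r s _ _
    · rw [dif_neg hj, dif_neg hj, dif_pos hu0, dif_neg hv0]
      split
      · exact gS_adj_inl_inr ℓ₁ q d r s _ _
      · exact gS_adj_inl_inr ℓ₁ q d r s _ _
  intro x y h
  cases h with
  | inl h' =>
    obtain ⟨i0, u, v, huv, rfl, rfl⟩ := h'
    rw [pathGraph_adj] at huv
    simp only [Sum.elim_inl]
    rcases huv with h1 | h1
    · exact key i0 u v h1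
    · exact (key i0 v u h1).symm
  | inr h' =>
    obtain ⟨j, u, v, huv, rfl, rfl⟩ := h'
    obtain ⟨hne, h0 | h0⟩ := huv
    · have hu0 : u.val = 0 := by rw [h0]; rfl
      have hv0 : v.val ≠ 0 := fun hc => hne (by
        apply Fin.ext; rw [hu0, hc])
      simp only [Sum.elim_inr]
      exact keyS j u v hu0 hv0
    · have hv0 : v.val = 0 := by rw [h0]; rfl
      have hu0 : u.val ≠ 0 := fun hc => hne (by
        apply Fin.ext; rw [hv0, hc])
      simp only [Sum.elim_inr]
      exact (keyS j v u hv0 hu0).symm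

end EmbedAux2
section EmbedAux3
variable (ℓ₁ q d r s aq : ℕ) (a : Fin q → ℕ)
variable (h4 : 4 ≤ ℓ₁) (he : ℓ₁ % 2 = 0) (hq : 1 ≤ q) (hd : s + 2 ≤ d)
  (hlast : ∀ j : Fin q, j.val = q - 1 → a j = aq) (hge : ℓ₁ - 1 ≤ aq)
  (hlow : aq + 1 ≤ s * (ℓ₁ - 1) + (ℓ₁ - 1) + r)
  (hcap : oSum q a (q - 1) + aq + 1 ≤ (d - s - 2) * (ℓ₁ - 1) + s * (ℓ₁ - 1) + (ℓ₁ - 1) + r)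

lemma embed_inj : Function.Injective
    (Sum.elim (embedPath ℓ₁ q d r s hq h4 hd)
      (embedStar ℓ₁ q d r s aq a h4 he hq hd hlast hge hlow hcap)) := by
  intro x y h
  rcases x with ⟨i, k⟩ | ⟨j, k⟩ <;> rcases y with ⟨i', k'⟩ | ⟨j', k'⟩ <;>
    simp only [Sum.elim_inl, Sum.elim_inr, embedPath, embedStar] at h <;>
    split_ifs at h <;>
    simp only [Sum.inl.injEq, Sum.inr.injEq, Sigma.mk.inj_iff, Fin.mk.injEq,
      Fin.ext_iff, heq_eq_eq, true_and, and_true, reduceCtorEq] at h <;>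
    try omega
  -- 1: path0 = path0
  · obtain rfl : i = i' := Subsingleton.elim _ _
    rw [show k = k' from Fin.ext (by omega)]
  -- 2: path+ = path+
  · obtain rfl : i = i' := Subsingleton.elim _ _
    rw [show k = k' from Fin.ext (by omega)]
  -- 3: path+ = pool1
  · exact absurd h.1 (Nat.ne_of_lt (by positivity))
  -- 4: pool1 = path+
  · exact absurd h.1 (Nat.ne_of_gt (by positivity))
  -- 5: last center = last center
  · obtain rfl : j = j' := Fin.ext (by omega)
    rw [show k = k' from Fin.ext (by omega)]
  -- 6: D = D
  · obtain rfl : j = j' := Fin.ext (by omega)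
    rw [show k = k' from Fin.ext (by omega)]
  -- 7: E = E
  · obtain rfl : j = j' := Fin.ext (by omega)
    rw [show k = k' from Fin.ext (by omega)]
  -- 8: E = pool2 : contradiction
  · rename_i hj hk hm hj' hk' hx
    have h1 := hlast j (by omega)
    have hkb := k.isLt
    have hlt : k.val - (ℓ₁ - 2) / 2 < aq - ((ℓ₁ - 2) / 2 - 1) := by omega
    exact absurd h (Nat.ne_of_lt (lt_of_lt_of_le hlt (Nat.le_add_right _ _)))
  -- 9: other center = other center
  · obtain rfl : j = j' := Fin.ext (by omega)
    rw [show k = k' from Fin.ext (by omega)]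
  -- 10: pool1 = pool1
  · obtain ⟨hdi, hmo⟩ := h
    have hXX : oSum q a j.val + (k.val - 1) = oSum q a j'.val + (k'.val - 1) := by
      have e1 := Nat.div_add_mod (oSum q a j.val + (k.val - 1)) (ℓ₁ - 1)
      have e2 := Nat.div_add_mod (oSum q a j'.val + (k'.val - 1)) (ℓ₁ - 1)
      have hdi' : (oSum q a j.val + (k.val - 1)) / (ℓ₁ - 1)
          = (oSum q a j'.val + (k'.val - 1)) / (ℓ₁ - 1) := by omega
      rw [← e1, ← e2, hdi', hmo]
    have hkb := k.isLt
    have hkb' := k'.isLt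
    obtain ⟨rfl, hkk⟩ := oSum_flat (a := a) (j := j) (j' := j') (by omega) (by omega) hXX
    rw [show k = k' from Fin.ext (by omega)]
  -- 11: pool2 = E : contradiction
  · rename_i hj hk hx hj' hk' hm
    have h1 := hlast j' (by omega)
    have hkb := k'.isLt
    have hlt : k'.val - (ℓ₁ - 2) / 2 < aq - ((ℓ₁ - 2) / 2 - 1) := by omega
    exact absurd h (Nat.ne_of_gt (lt_of_lt_of_le hlt (Nat.le_add_right _ _)))
  -- 12: pool2 = pool2
  · rename_i hj hk hx hj' hk' hx'
    have h' := Nat.add_left_cancel h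
    have hXX : oSum q a j.val + (k.val - 1) = oSum q a j'.val + (k'.val - 1) := by omega
    have hkb := k.isLt
    have hkb' := k'.isLt
    obtain ⟨rfl, hkk⟩ := oSum_flat (a := a) (j := j) (j' := j') (by omega) (by omega) hXX
    rw [show k = k' from Fin.ext (by omega)]
end EmbedAux3
theorem gS_free_iff (ℓ₁ q : ℕ) (a : Fin q → ℕ)
    (hℓ : 4 ≤ ℓ₁) (heven : Even ℓ₁) (hq : 1 ≤ q)
    (ha : ∀ j, 3 ≤ a j) (hmono : Antitone a)
    (haq : ℓ₁ - 1 ≤ a ⟨q - 1, by omega⟩) :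
    (∀ d r s : ℕ, r < ℓ₁ - 1 → s + 2 ≤ d →
      (s + 1) * (ℓ₁ - 1) + r ≤ a ⟨q - 1, by omega⟩ →
      IsFree (pathStarForest 1 q (fun _ => ℓ₁) a) (gS q ℓ₁ d r s)) ∧
    ∃ N : ℕ, ∀ d r s : ℕ, r < ℓ₁ - 1 → s + 2 ≤ d →
      N ≤ q + d * (ℓ₁ - 1) + r →
      a ⟨q - 1, by omega⟩ + 1 ≤ (s + 1) * (ℓ₁ - 1) + r →
      ContainsCopy (pathStarForest 1 q (fun _ => ℓ₁) a) (gS q ℓ₁ d r s) := by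
  have hq1 : q - 1 < q := by omega
  obtain ⟨e2, he2⟩ := heven
  constructor
  · -- Part (i): freeness
    intro d r s hr hd hle
    have hle' : (s + 1) * (ℓ₁ - 1) + r ≤ a ⟨q - 1, hq1⟩ := hle
    have haq' : ℓ₁ - 1 ≤ a ⟨q - 1, hq1⟩ := haq
    rintro ⟨f, hinj⟩
    -- "block" stability along edges of the inner graph
    have hstep : ∀ x y, (gS q ℓ₁ d r s).Adj (Sum.inr x) (Sum.inr y) →
        Sum.elim (fun p => some p.1) (fun _ => (none : Option (Fin (d - s - 1)))) x =
        Sum.elim (fun p => some p.1) (fun _ => none) y := by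
      intro x y hxy
      have h' : Sum.LiftRel (kCopies (d - s - 1) (⊤ : SimpleGraph (Fin (ℓ₁ - 1)))).Adj
          (joinG (⊤ : SimpleGraph (Fin ((ℓ₁ - 2) / 2)))
            (⊥ : SimpleGraph (Fin (ℓ₁ / 2 + s * (ℓ₁ - 1) + r)))).Adj x y := hxy
      cases h' with
      | inl h'' => obtain ⟨i, u, v, -, rfl, rfl⟩ := h''; rfl
      | inr h'' => rfl
    -- adjacency producers in F
    have hFpath : ∀ (u v : Fin ℓ₁), (pathGraph ℓ₁).Adj u v →
        (pathStarForest 1 q (fun _ => ℓ₁) a).Adj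
          (Sum.inl ⟨⟨0, Nat.one_pos⟩, u⟩) (Sum.inl ⟨⟨0, Nat.one_pos⟩, v⟩) :=
      fun u v h => Sum.LiftRel.inl ⟨⟨0, Nat.one_pos⟩, u, v, h, rfl, rfl⟩
    have hFstar : ∀ (j : Fin q) (k : Fin (a j + 1)), k ≠ 0 →
        (pathStarForest 1 q (fun _ => ℓ₁) a).Adj (Sum.inr ⟨j, 0⟩) (Sum.inr ⟨j, k⟩) :=
      fun j k hk => Sum.LiftRel.inr ⟨j, 0, k, ⟨Ne.symm hk, Or.inl rfl⟩, rfl, rfl⟩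
    have hcard : ∀ {n n' : ℕ} (g : Fin n → Fin n'), Function.Injective g → n ≤ n' := by
      intro n n' g hg
      simpa using Fintype.card_le_of_injective g hg
    have hcard2 : ∀ {n m t : ℕ} (g : Fin n → Fin m ⊕ Fin t), Function.Injective g → n ≤ m + t := by
      intro n m t g hg
      simpa using Fintype.card_le_of_injective g hg
    by_cases hP : ∃ k : Fin ℓ₁, ∃ z, f (Sum.inl ⟨⟨0, Nat.one_pos⟩, k⟩) = Sum.inl z
    · by_cases hS : ∀ j : Fin q, ∃ k : Fin (a j + 1), ∃ z, f (Sum.inr ⟨j, k⟩) = Sum.inl z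
      · -- pigeonhole: q+1 components all meet K_q
        obtain ⟨kp, zp, hzp⟩ := hP
        choose ks zs hzs using hS
        have hginj : Function.Injective (fun o : Option (Fin q) => o.elim zp zs) := by
          intro o o' hoo
          match o, o' with
          | none, none => rfl
          | none, some j =>
            exfalso
            simp only [Option.elim] at hoo
            have hff : f (Sum.inl ⟨⟨0, Nat.one_pos⟩, kp⟩) = f (Sum.inr ⟨j, ks j⟩) := by
              rw [hzp, hzs, hoo]
            exact absurd (hinj hff) (by simp)
          | some j, none =>
            exfalso
            simp only [Option.elim] at hoo
            have hff : f (Sum.inr ⟨j, ks j⟩) = f (Sum.inl ⟨⟨0, Nat.one_pos⟩, kp⟩) := by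
              rw [hzp, hzs, hoo]
            exact absurd (hinj hff) (by simp)
          | some j, some j' =>
            simp only [Option.elim] at hoo
            have hff : f (Sum.inr ⟨j, ks j⟩) = f (Sum.inr ⟨j', ks j'⟩) := by
              rw [hzs, hzs, hoo]
            have h2 := hinj hff
            simp only [Sum.inr.injEq, Sigma.mk.inj_iff] at h2
            rw [h2.1]
        have hcardO := Fintype.card_le_of_injective _ hginj
        simp at hcardO
      · -- some star lies entirely inside the inner graph
        push_neg at hS
        obtain ⟨j, hj⟩ := hS
        have hgex : ∀ k : Fin (a j + 1), ∃ y, f (Sum.inr ⟨j, k⟩) = Sum.inr y := by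
          intro k
          rcases hf : f (Sum.inr ⟨j, k⟩) with z | y
          · exact absurd hf (hj k z)
          · exact ⟨y, rfl⟩
        choose g hg using hgex
        have hblk : ∀ k, Sum.elim (fun p => some p.1)
              (fun _ => (none : Option (Fin (d - s - 1)))) (g k) =
            Sum.elim (fun p => some p.1) (fun _ => none) (g 0) := by
          intro k
          by_cases hk0 : k = 0
          · rw [hk0]
          · have hadj := f.map_adj (hFstar j k hk0)
            rw [hg 0, hg k] at hadj
            exact (hstep _ _ hadj).symm
        have hginj : Function.Injective g := by
          intro k k' hkk
          have hff : f (Sum.inr ⟨j, k⟩) = f (Sum.inr ⟨j, k'⟩) := by rw [hg, hg, hkk]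
          have h2 := hinj hff
          simp only [Sum.inr.injEq, Sigma.mk.inj_iff, heq_eq_eq, true_and] at h2
          exact h2
        have haj : a ⟨q - 1, hq1⟩ ≤ a j :=
          hmono (by rw [Fin.le_def]; simp; omega)
        rcases hb0 : g 0 with p | b0
        · -- star inside one clique copy
          have hiu : ∀ k, ∃ u, g k = Sum.inl ⟨p.1, u⟩ := by
            intro k
            have hb := hblk k
            rw [hb0] at hb
            rcases hg2 : g k with ⟨p1', u'⟩ | bbx
            · rw [hg2] at hb
              simp only [Sum.elim_inl, Option.some.injEq] at hb
              subst hb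
              exact ⟨u', rfl⟩
            · rw [hg2] at hb; simp at hb
          choose u hu using hiu
          have huinj : Function.Injective u := by
            intro k k' hkk
            apply hginj
            rw [hu, hu, hkk]
          have hle2 := hcard u huinj
          omega
        · -- star inside B : size contradiction
          have hib : ∀ k, ∃ bb, g k = Sum.inr bb := by
            intro k
            have hb := hblk k
            rw [hb0] at hb
            rcases hg2 : g k with p' | bb
            · rw [hg2] at hb; simp at hb
            · exact ⟨bb, rfl⟩
          choose bb hbb using hib
          have hbinj : Function.Injective bb := by
            intro k k' hkk
            apply hginj
            rw [hbb, hbb, hkk]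
          have hle2 := hcard2 bb hbinj
          have hsm : (s + 1) * (ℓ₁ - 1) = s * (ℓ₁ - 1) + (ℓ₁ - 1) := Nat.succ_mul _ _
          omega
    · -- the path lies entirely inside the inner graph
      push_neg at hP
      have hgex : ∀ k : Fin ℓ₁, ∃ y, f (Sum.inl ⟨⟨0, Nat.one_pos⟩, k⟩) = Sum.inr y := by
        intro k
        rcases hf : f (Sum.inl ⟨⟨0, Nat.one_pos⟩, k⟩) with z | y
        · exact absurd hf (hP k z)
        · exact ⟨y, rfl⟩
      choose g hg using hgex
      have hblk : ∀ (kv : ℕ) (hk : kv < ℓ₁),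
          Sum.elim (fun p => some p.1) (fun _ => (none : Option (Fin (d - s - 1))))
              (g ⟨kv, hk⟩) =
            Sum.elim (fun p => some p.1) (fun _ => none) (g ⟨0, by omega⟩) := by
        intro kv
        induction kv with
        | zero => intro hk; rfl
        | succ n ih =>
          intro hk
          have hadj := f.map_adj (hFpath ⟨n, by omega⟩ ⟨n + 1, hk⟩
            (pathGraph_adj.2 (Or.inl rfl)))
          rw [hg, hg] at hadj
          exact (hstep _ _ hadj).symm.trans (ih (by omega))
      rcases hb0 : g ⟨0, by omega⟩ with p | b0
      · -- path inside one clique copy : ℓ₁ ≤ ℓ₁ - 1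
        have hiu : ∀ k : Fin ℓ₁, ∃ u, g k = Sum.inl ⟨p.1, u⟩ := by
          intro k
          have hb := hblk k.val k.isLt
          rw [hb0] at hb
          rw [Fin.eta] at hb
          rcases hg2 : g k with ⟨p1', u'⟩ | bbv
          · rw [hg2] at hb
            simp only [Sum.elim_inl, Option.some.injEq] at hb
            subst hb
            exact ⟨u', rfl⟩
          · rw [hg2] at hb; simp at hb
        choose u hu using hiu
        have huinj : Function.Injective u := by
          intro k k' hkk
          have hgg : g k = g k' := by rw [hu, hu, hkk]
          have hff : f (Sum.inl ⟨⟨0, Nat.one_pos⟩, k⟩) = f (Sum.inl ⟨⟨0, Nat.one_pos⟩, k'⟩) := by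
            rw [hg, hg, hgg]
          have h2 := hinj hff
          simp only [Sum.inl.injEq, Sigma.mk.inj_iff, heq_eq_eq, true_and] at h2
          exact h2
        have hle2 := hcard u huinj
        omega
      · -- path inside B : parity contradiction
        have hib : ∀ k : Fin ℓ₁, ∃ bbv, g k = Sum.inr bbv := by
          intro k
          have hb := hblk k.val k.isLt
          rw [hb0] at hb
          rw [Fin.eta] at hb
          rcases hg2 : g k with p' | bbv
          · rw [hg2] at hb; simp at hb
          · exact ⟨bbv, rfl⟩
        choose bb hbb using hib
        have hpair : ∀ p : Fin (ℓ₁ / 2), ∃ (kv : ℕ) (hk : kv < ℓ₁) (c : Fin ((ℓ₁ - 2) / 2)),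
            kv / 2 = p.val ∧ bb ⟨kv, hk⟩ = Sum.inl c := by
          intro p
          have hp := p.isLt
          have h1 : 2 * p.val < ℓ₁ := by omega
          have h2 : 2 * p.val + 1 < ℓ₁ := by omega
          have hadj := f.map_adj (hFpath ⟨2 * p.val, h1⟩ ⟨2 * p.val + 1, h2⟩
            (pathGraph_adj.2 (Or.inl rfl)))
          rw [hg, hg] at hadj
          rw [hbb ⟨2 * p.val, h1⟩, hbb ⟨2 * p.val + 1, h2⟩] at hadj
          have hadj2 : Sum.LiftRel (kCopies (d - s - 1) (⊤ : SimpleGraph (Fin (ℓ₁ - 1)))).Adj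
              (joinG (⊤ : SimpleGraph (Fin ((ℓ₁ - 2) / 2)))
                (⊥ : SimpleGraph (Fin (ℓ₁ / 2 + s * (ℓ₁ - 1) + r)))).Adj
              (Sum.inr (bb ⟨2 * p.val, h1⟩)) (Sum.inr (bb ⟨2 * p.val + 1, h2⟩)) := hadj
          cases hadj2 with
          | inr h3 =>
            rcases hc1 : bb ⟨2 * p.val, h1⟩ with c | z
            · exact ⟨2 * p.val, h1, c, by omega, hc1⟩
            · rcases hc2 : bb ⟨2 * p.val + 1, h2⟩ with c | z'
              · exact ⟨2 * p.val + 1, h2, c, by omega, hc2⟩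
              · rw [hc1, hc2] at h3
                exact absurd h3 (by simp [joinG])
        choose kv hk c hdiv hbc using hpair
        have hcinj : Function.Injective c := by
          intro p p' hpp
          have hb2 : bb ⟨kv p, hk p⟩ = bb ⟨kv p', hk p'⟩ := by rw [hbc, hbc, hpp]
          have hgg : g ⟨kv p, hk p⟩ = g ⟨kv p', hk p'⟩ := by rw [hbb, hbb, hb2]
          have hff : f (Sum.inl ⟨⟨0, Nat.one_pos⟩, ⟨kv p, hk p⟩⟩) =
              f (Sum.inl ⟨⟨0, Nat.one_pos⟩, ⟨kv p', hk p'⟩⟩) := by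
            rw [hg, hg, hgg]
          have h2 := hinj hff
          simp only [Sum.inl.injEq, Sigma.mk.inj_iff, heq_eq_eq, true_and,
            Fin.mk.injEq] at h2
          apply Fin.ext
          have hd1 := hdiv p
          have hd2 := hdiv p'
          omega
        have hle2 := hcard c hcinj
        omega
  · -- Part (ii): containment
    refine ⟨q + ℓ₁ + 2 * (∑ j, a j) + 8, ?_⟩
    intro d r s hr hd hn hup
    have he : ℓ₁ % 2 = 0 := by omega
    have hup' : a ⟨q - 1, hq1⟩ + 1 ≤ (s + 1) * (ℓ₁ - 1) + r := hup
    have hlast : ∀ j : Fin q, j.val = q - 1 → a j = a ⟨q - 1, hq1⟩ := by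
      intro j hj
      congr 1
      exact Fin.ext (by simpa using hj)
    have hge' : ℓ₁ - 1 ≤ a ⟨q - 1, hq1⟩ := haq
    have hlow : a ⟨q - 1, hq1⟩ + 1 ≤ s * (ℓ₁ - 1) + (ℓ₁ - 1) + r := by
      rw [Nat.succ_mul] at hup'
      omega
    have hcap : oSum q a (q - 1) + a ⟨q - 1, hq1⟩ + 1 ≤
        (d - s - 2) * (ℓ₁ - 1) + s * (ℓ₁ - 1) + (ℓ₁ - 1) + r := by
      have ht : oSum q a (q - 1) + a ⟨q - 1, hq1⟩ = ∑ j, a j := oSum_total q a hq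
      obtain ⟨c, hdc⟩ : ∃ c, d = c + s + 2 := ⟨d - s - 2, by omega⟩
      subst hdc
      have hm1 : (c + s + 2 - s - 2) * (ℓ₁ - 1) + s * (ℓ₁ - 1) + (ℓ₁ - 1)
          = (c + s + 1) * (ℓ₁ - 1) := by
        rw [show c + s + 2 - s - 2 = c from by omega]; ring
      have hm2 : (c + s + 2) * (ℓ₁ - 1) = (c + s + 1) * (ℓ₁ - 1) + (ℓ₁ - 1) := by ring
      omega
    exact ⟨⟨Sum.elim (embedPath ℓ₁ q d r s hq hℓ hd)
        (embedStar ℓ₁ q d r s (a ⟨q - 1, hq1⟩) a hℓ he hq hd hlast hge' hlow hcap),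
      fun {x y} h => embed_hom ℓ₁ q d r s (a ⟨q - 1, hq1⟩) a hℓ he hq hd hlast hge' hlow hcap x y h⟩,
      embed_inj ℓ₁ q d r s (a ⟨q - 1, hq1⟩) a hℓ he hq hd hlast hge' hlow hcap⟩
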